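/- Let X be a Hermitian n×n matrix, x, y real, and ω^x(Y) = Tr(e^{xX} Y)/Tr(e^{xX}). Then |Tr(e^{(x+iy)X})| / Tr(e^{xX}) = |ω^x(e^{iyX})| ≥ 2 − e^{|y|·‖X‖}. In particular, if |y|·‖X‖ < log 2 then Tr(e^{(x+iy)X}) ≠ 0. -/

import Mathlib

open Matrix Filter
open scoped ComplexOrder ENNReal Classical

/-- The operator (ℓ²→ℓ²) norm of a complex matrix. -/
noncomputable def opNorm {m : ℕ} (M : Matrix (Fin m) (Fin m) ℂ) : ℝ :=
  ‖Matrix.toEuclideanCLM (𝕜 := ℂ) M‖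

/-- Matrix exponential. -/
noncomputable def mexp {m : ℕ} (M : Matrix (Fin m) (Fin m) ℂ) : Matrix (Fin m) (Fin m) ℂ :=
  NormedSpace.exp M

/-- `|X| = √(X* X)`, the positive part in the polar decomposition. -/
noncomputable def absMat {m : ℕ} (X : Matrix (Fin m) (Fin m) ℂ) : Matrix (Fin m) (Fin m) ℂ :=
  (Matrix.posSemidef_conjTranspose_mul_self X).1.eigenvectorUnitary.1 *
    diagonal ((↑) ∘ (√·) ∘ (Matrix.posSemidef_conjTranspose_mul_self X).1.eigenvalues) *
    (star (Matrix.posSemidef_conjTranspose_mul_self X).1.eigenvectorUnitary : Matrix (Fin m) (Fin m) ℂ)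

lemma trace_exp_smul {m : ℕ} (X : Matrix (Fin m) (Fin m) ℂ) (hX : X.IsHermitian) (c : ℂ) :
    (NormedSpace.exp (c • X)).trace = ∑ k, Complex.exp (c * hX.eigenvalues k) := by
  set U : Matrix (Fin m) (Fin m) ℂ := (hX.eigenvectorUnitary : Matrix (Fin m) (Fin m) ℂ)
  have hU : IsUnit U := (Unitary.toUnits hX.eigenvectorUnitary).isUnit
  have hUinv : U⁻¹ = star U := Matrix.inv_eq_left_inv (Matrix.mem_unitaryGroup_iff'.mp hX.eigenvectorUnitary.2)
  have h1 : c • X = U * (Matrix.diagonal (fun k => c * (hX.eigenvalues k : ℂ))) * U⁻¹ := by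
    conv_lhs => rw [hX.spectral_theorem, Unitary.conjStarAlgAut_apply]
    rw [hUinv, ← smul_mul_assoc, ← mul_smul_comm]
    congr 1
    congr 1
    rw [← Matrix.diagonal_smul]
    congr 1
  rw [h1, Matrix.exp_conj _ _ hU, Matrix.exp_diagonal]
  rw [Matrix.trace_mul_cycle, Matrix.nonsing_inv_mul _ (Matrix.isUnit_iff_isUnit_det _ |>.mp hU), Matrix.one_mul]
  rw [Matrix.trace_diagonal]
  congr 1; ext k
  rw [Pi.coe_exp, ← Complex.exp_eq_exp_ℂ]

lemma eig_bound {m : ℕ} (X : Matrix (Fin m) (Fin m) ℂ) (hX : X.IsHermitian) (k : Fin m) :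
    |hX.eigenvalues k| ≤ opNorm X := by
  set v : EuclideanSpace ℂ (Fin m) := hX.eigenvectorBasis k
  have hv : ‖v‖ = 1 := hX.eigenvectorBasis.orthonormal.1 k
  have hmv : Matrix.toEuclideanCLM (𝕜 := ℂ) X v = (hX.eigenvalues k : ℝ) • v := by
    have h1 := Matrix.ofLp_toEuclideanCLM (𝕜 := ℂ) X v
    apply (WithLp.equiv 2 _).injective
    rw [WithLp.equiv_apply, WithLp.equiv_apply, h1]
    have : v.ofLp = ⇑(hX.eigenvectorBasis k) := rfl
    rw [this, hX.mulVec_eigenvectorBasis]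
    rfl
  have h2 : ‖Matrix.toEuclideanCLM (𝕜 := ℂ) X v‖ = |hX.eigenvalues k| := by
    rw [hmv, norm_smul, hv, mul_one, Real.norm_eq_abs]
  calc |hX.eigenvalues k| = ‖Matrix.toEuclideanCLM (𝕜 := ℂ) X v‖ := h2.symm
    _ ≤ ‖Matrix.toEuclideanCLM (𝕜 := ℂ) X‖ * ‖v‖ := (Matrix.toEuclideanCLM (𝕜 := ℂ) X).le_opNorm v
    _ = opNorm X := by rw [hv, mul_one, opNorm]

lemma exp_I_sub_one_bound (θ : ℝ) :
    ‖Complex.exp (θ * Complex.I) - 1‖ ≤ Real.exp |θ| - 1 := by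
  have h1 : ‖Complex.exp (θ * Complex.I) - 1‖ ≤ |θ| := by
    have hsq : Complex.normSq (Complex.exp (θ * Complex.I) - 1) = 2 - 2 * Real.cos θ := by
      rw [Complex.exp_mul_I]
      simp [Complex.normSq_apply, Complex.cos_ofReal_re, Complex.sin_ofReal_re,
        Complex.add_re, Complex.add_im, Complex.mul_I_re, Complex.mul_I_im]
      have := Real.sin_sq_add_cos_sq θ
      ring_nf
      nlinarith [Real.sin_sq_add_cos_sq θ]
    have hc : 1 - θ^2/2 ≤ Real.cos θ := Real.one_sub_sq_div_two_le_cos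
    have : Complex.normSq (Complex.exp (θ * Complex.I) - 1) ≤ θ^2 := by
      rw [hsq]; nlinarith
    calc ‖Complex.exp (θ * Complex.I) - 1‖
        = Real.sqrt (Complex.normSq (Complex.exp (θ * Complex.I) - 1)) := by
          rw [Complex.norm_def]
      _ ≤ Real.sqrt (θ^2) := Real.sqrt_le_sqrt this
      _ = |θ| := Real.sqrt_sq_eq_abs θ
  have h2 : |θ| ≤ Real.exp |θ| - 1 := by
    have := Real.add_one_le_exp |θ|
    linarith
  linarith

/-- `|Tr e^{(x+iy)X}| / Tr e^{xX} = |ω^x(e^{iyX})| ≥ 2 − e^{|y|‖X‖}`; in particular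
`Tr e^{(x+iy)X} ≠ 0` whenever `|y|‖X‖ < log 2`. -/
theorem stmt9 {m : ℕ} (hm : 0 < m) (X : Matrix (Fin m) (Fin m) ℂ)
    (hX : X.IsHermitian) (x y : ℝ) :
    ‖(mexp (((x : ℂ) + y * Complex.I) • X)).trace‖ / (mexp (x • X)).trace.re
      = ‖(mexp (x • X) * mexp ((y * Complex.I) • X)).trace
          / (mexp (x • X)).trace‖ ∧
    2 - Real.exp (|y| * opNorm X) ≤
      ‖(mexp (((x : ℂ) + y * Complex.I) • X)).trace‖ / (mexp (x • X)).trace.re ∧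
    (|y| * opNorm X < Real.log 2 → (mexp (((x : ℂ) + y * Complex.I) • X)).trace ≠ 0) := by
  haveI : Nonempty (Fin m) := ⟨⟨0, hm⟩⟩
  set ev : Fin m → ℝ := hX.eigenvalues with hev
  set w : Fin m → ℝ := fun k => Real.exp (x * ev k) with hw
  set T : ℝ := ∑ k, w k with hT
  have hTpos : 0 < T := Finset.sum_pos (fun k _ => Real.exp_pos _) Finset.univ_nonempty
  have hxsmul : x • X = ((x : ℂ)) • X := by
    ext i j; simp [Matrix.smul_apply, Complex.real_smul]
  -- trace of mexp (x • X)
  have htr1 : (mexp (x • X)).trace = (T : ℂ) := by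
    rw [mexp, hxsmul, trace_exp_smul X hX, hT]
    simp only [hw, hev]
    push_cast [Complex.ofReal_exp]
    rfl
  have htr1re : (mexp (x • X)).trace.re = T := by rw [htr1, Complex.ofReal_re]
  -- trace of mexp ((x+iy) • X)
  have htr2 : (mexp (((x : ℂ) + y * Complex.I) • X)).trace
      = ∑ k, (w k : ℂ) * Complex.exp ((y * ev k : ℝ) * Complex.I) := by
    rw [mexp, trace_exp_smul X hX]
    congr 1; ext k
    rw [add_mul, Complex.exp_add]
    congr 1
    · rw [hw]; push_cast [Complex.ofReal_exp]; ring_nf; rfl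
    · push_cast; ring_nf; rfl
  -- product = exp of sum
  have hcomm : Commute (((x : ℂ)) • X) ((((y : ℂ)) * Complex.I) • X) :=
    ((Commute.refl X).smul_left _).smul_right _
  have hprod : mexp (x • X) * mexp ((y * Complex.I) • X)
      = mexp (((x : ℂ) + y * Complex.I) • X) := by
    rw [mexp, mexp, mexp, hxsmul, add_smul]
    exact (Matrix.exp_add_of_commute _ _ hcomm).symm
  -- claim 1
  have habsT : ‖(mexp (x • X)).trace‖ = T := by
    rw [htr1, Complex.norm_real, Real.norm_eq_abs, abs_of_pos hTpos]
  have c1 : ‖(mexp (((x : ℂ) + y * Complex.I) • X)).trace‖ / (mexp (x • X)).trace.re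
      = ‖(mexp (x • X) * mexp ((y * Complex.I) • X)).trace
          / (mexp (x • X)).trace‖ := by
    rw [hprod, norm_div, habsT, htr1re]
  have c2 : 2 - Real.exp (|y| * opNorm X) ≤
      ‖(mexp (((x : ℂ) + y * Complex.I) • X)).trace‖ / (mexp (x • X)).trace.re := by
    set E : ℝ := Real.exp (|y| * opNorm X) with hE
    set N : ℂ := (mexp (((x : ℂ) + y * Complex.I) • X)).trace with hN
    have hdiff : N - (T : ℂ) = ∑ k, (w k : ℂ) * (Complex.exp ((y * ev k : ℝ) * Complex.I) - 1) := by
      rw [htr2, hT]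
      push_cast
      rw [← Finset.sum_sub_distrib]
      congr 1; ext k; ring
    have hbound : ‖N - (T : ℂ)‖ ≤ T * (E - 1) := by
      rw [hdiff]
      calc ‖∑ k, (w k : ℂ) * (Complex.exp ((y * ev k : ℝ) * Complex.I) - 1)‖
          ≤ ∑ k, ‖(w k : ℂ) * (Complex.exp ((y * ev k : ℝ) * Complex.I) - 1)‖ :=
            norm_sum_le _ _
        _ ≤ ∑ k, w k * (E - 1) := by
            apply Finset.sum_le_sum
            intro k _
            rw [norm_mul, Complex.norm_real, Real.norm_eq_abs, abs_of_pos (Real.exp_pos _)]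
            apply mul_le_mul_of_nonneg_left _ (Real.exp_pos _).le
            calc ‖Complex.exp ((y * ev k : ℝ) * Complex.I) - 1‖
                ≤ Real.exp |y * ev k| - 1 := exp_I_sub_one_bound _
              _ ≤ E - 1 := by
                  rw [hE]
                  have h1 : |y * ev k| ≤ |y| * opNorm X := by
                    rw [abs_mul]
                    apply mul_le_mul_of_nonneg_left (eig_bound X hX k) (abs_nonneg y)
                  have := Real.exp_le_exp.mpr h1
                  linarith
        _ = T * (E - 1) := by rw [hT, ← Finset.sum_mul]
    have hlow : T * (2 - E) ≤ ‖N‖ := by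
      have h1 : ‖(T : ℂ)‖ - ‖N - (T : ℂ)‖ ≤ ‖N‖ := by
        have h2 := norm_sub_norm_le (T : ℂ) N
        rw [norm_sub_rev] at h2
        linarith
      rw [Complex.norm_real, Real.norm_eq_abs, abs_of_pos hTpos] at h1
      nlinarith
    rw [htr1re, le_div_iff₀ hTpos]
    nlinarith
  refine ⟨c1, c2, ?_⟩
  -- nonvanishing
  intro hy h0
  have hE2 : Real.exp (|y| * opNorm X) < 2 := by
    have := Real.exp_lt_exp.mpr hy
    rwa [Real.exp_log two_pos] at this
  have hc2 := c2
  rw [h0] at hc2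
  simp only [norm_zero, zero_div] at hc2
  linarith
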